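/- Let T be a semistandard tableau, let T^{(j)} be obtained by successive length swaps moving the first column rightward, and let b_h^{(j)} denote the bottom entry of column h of T^{(j)}. For 1 ≤ j ≤ k−1: if b_{j+1}^{(j)} ≥ b_j^{(j)} then b_{j+1}^{(j+1)} = b_{j+1}^{(j)}, and otherwise b_{j+1}^{(j+1)} = b_j^{(j)}. -/

import Mathlib

namespace Demazure

/-- A tableau given as its list of columns (left to right); each column lists its
entries from top to bottom. -/
abbrev Cols := List (List ℕ)

/-- The shape of a tableau: the list of its column lengths. -/
def shape (T : Cols) : List ℕ := T.map List.length

/-- Semistandard: column lengths weakly decreasing, entries strictly increasing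
down each column, and entries weakly increasing along rows. -/
def IsSSYT (T : Cols) : Prop :=
  (shape T).Chain' (fun a b => b ≤ a) ∧
  (∀ c ∈ T, c.Chain' (· < ·)) ∧
  T.Chain' (fun c c' => ∀ i, i < c'.length → c.getD i 0 ≤ c'.getD i 0)

/-- All entries lie in [n] = {1, ..., n}. -/
def EntriesIn (n : ℕ) (T : Cols) : Prop := ∀ c ∈ T, ∀ x ∈ c, 1 ≤ x ∧ x ≤ n

/-- A key: every entry of a column appears in the previous column. -/
def IsKeyCols (T : Cols) : Prop := T.Chain' (fun c c' => ∀ x ∈ c', x ∈ c)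

/-- Entrywise comparison of two tableaux of the same shape. -/
def EntrywiseLE (T U : Cols) : Prop := List.Forall₂ (List.Forall₂ (· ≤ ·)) T U

/-- Entry at column j, row i (1-indexed); 0 if out of range. -/
def entryAt (T : Cols) (j i : ℕ) : ℕ := (T.getD (j-1) []).getD (i-1) 0

/-- Continuation of the earliest weakly increasing subsequence after value `c`. -/
def ewisFrom (c : ℕ) : List ℕ → List ℕ
  | [] => []
  | x :: xs => if c ≤ x then x :: ewisFrom x xs else ewisFrom c xs

/-- The earliest weakly increasing subsequence (EWIS) of a sequence. -/
def ewis : List ℕ → List ℕ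
  | [] => []
  | x :: xs => x :: ewisFrom x xs

/-- One scanning sweep: continue the EWIS of column bottoms with current value `c`,
returning the last value of the EWIS and the columns with the EWIS boxes removed. -/
def scanAux (c : ℕ) : Cols → ℕ × Cols
  | [] => (c, [])
  | col :: rest =>
    match col.getLast? with
    | some b =>
      if c ≤ b then
        let r := scanAux b rest
        (r.1, col.dropLast :: r.2)
      else
        let r := scanAux c rest
        (r.1, col :: r.2)
    | none =>
      let r := scanAux c rest
      (r.1, col :: r.2)

/-- Produce the first column of the scanning tableau (top to bottom), with fuel. -/
def scanFirstFuel : ℕ → Cols → List ℕ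
  | 0, _ => []
  | _, [] => []
  | fuel+1, col :: rest =>
    match col.getLast? with
    | none => []
    | some b =>
      let r := scanAux b rest
      scanFirstFuel fuel (col.dropLast :: r.2) ++ [r.1]

/-- First column of the scanning tableau. -/
def scanFirst (T : Cols) : List ℕ :=
  scanFirstFuel (T.headD []).length T

/-- The scanning tableau S(T), column by column. -/
def scanTableau : Cols → Cols
  | [] => []
  | col :: rest => scanFirst (col :: rest) :: scanTableau rest

/-- Scanning-path version of `scanAux`: also records the boxes (column, row),
1-indexed, visited by the EWIS; `h` is the (1-indexed) number of the first column
of the remaining list. -/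
def scanPathAux (c h : ℕ) : Cols → List (ℕ × ℕ) × Cols
  | [] => ([], [])
  | col :: rest =>
    match col.getLast? with
    | some b =>
      if c ≤ b then
        let r := scanPathAux b (h+1) rest
        ((h, col.length) :: r.1, col.dropLast :: r.2)
      else
        let r := scanPathAux c (h+1) rest
        (r.1, col :: r.2)
    | none =>
      let r := scanPathAux c (h+1) rest
      (r.1, col :: r.2)

/-- The scanning paths originating in (1-indexed) column `j`, listed from the top
row of the column downwards. -/
def scanColPathsAux (j : ℕ) : ℕ → List ℕ → Cols → List (List (ℕ × ℕ))
  | 0, _, _ => []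
  | fuel+1, col, rest =>
    match col.getLast? with
    | none => []
    | some b =>
      let r := scanPathAux b (j+1) rest
      scanColPathsAux j fuel col.dropLast r.2 ++ [(j, col.length) :: r.1]

/-- The list of scanning paths P(T; j, ·) for the boxes of column j (1-indexed),
element i-1 being the path of the box in row i. -/
def pathsFrom (T : Cols) (j : ℕ) : List (List (ℕ × ℕ)) :=
  scanColPathsAux j (T.getD (j-1) []).length (T.getD (j-1) []) (T.drop j)

/-- The scanning path P(T; j, i) (1-indexed box). -/
def scanPath (T : Cols) (j i : ℕ) : List (ℕ × ℕ) :=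
  (pathsFrom T j).getD (i-1) []

/-- The scanning-tableau entry S(T; j, i): the value at the last box of P(T;j,i). -/
def sVal (T : Cols) (j i : ℕ) : ℕ :=
  match (scanPath T j i).getLast? with
  | some q => entryAt T q.1 q.2
  | none => 0

/-- The row index a(l,k;j): row of the path through (l-1, k); by convention k at j = l. -/
def aIdx (T : Cols) (l k j : ℕ) : ℕ :=
  if j = l then k
  else ((pathsFrom T j).findIdx (fun p => decide ((l-1, k) ∈ p))) + 1

/-- The row index b(l,k;j): row of the path through (l, k+1), with the stated
conventions at k = ζ_l and at j = l. -/
def bIdx (T : Cols) (l k j : ℕ) : ℕ :=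
  if j = l then k + 1
  else if k = (T.getD (l-1) []).length then (T.getD (j-1) []).length + 1
  else ((pathsFrom T j).findIdx (fun p => decide ((l, k+1) ∈ p))) + 1

/-- E(l,k;j,i): the last value of the EWIS defining P(T;j,i) occurring strictly to
the left of column l; by convention k when j = l. -/
def eVal (T : Cols) (l k j i : ℕ) : ℕ :=
  if j = l then k
  else
    match ((scanPath T j i).filter (fun q => decide (q.1 < l))).getLast? with
    | some q => entryAt T q.1 q.2
    | none => 0

/-- The local condition set B(T, Y; l, k) =
⋂_{j=1}^{l} ⋃_{i=a(j)}^{b(j)-1} [E(l,k;j,i), Y(j,i)]. -/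
def localB (T Y : Cols) (l k : ℕ) : Set ℕ :=
  {v | ∀ j, 1 ≤ j → j ≤ l →
    ∃ i, aIdx T l k j ≤ i ∧ i + 1 ≤ bIdx T l k j ∧
      eVal T l k j i ≤ v ∧ v ≤ entryAt Y j i}

/-- A skew tableau, as a list of columns, each with its offset (number of absent
boxes above it) and its list of entries (top to bottom). -/
abbrev SkewCols := List (ℕ × List ℕ)

/-- Entry of an offset column in absolute row r (0-indexed). -/
def colEntry? (p : ℕ × List ℕ) (r : ℕ) : Option ℕ :=
  if p.1 ≤ r then p.2[r - p.1]? else none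

/-- Validity of a skew tableau: columns strictly increase, the inner and outer
column lengths are weakly decreasing, and rows weakly increase. -/
def IsSkewTableau (U : SkewCols) : Prop :=
  (∀ p ∈ U, p.2.Chain' (· < ·)) ∧
  (U.map Prod.fst).Chain' (fun a b => b ≤ a) ∧
  (U.map (fun p => p.1 + p.2.length)).Chain' (fun a b => b ≤ a) ∧
  U.Chain' (fun p q => ∀ r x y, colEntry? p r = some x → colEntry? q r = some y → x ≤ y)

/-- The entries of absolute row r of a skew tableau, left to right. -/
def skewRow (U : SkewCols) (r : ℕ) : List ℕ :=
  U.filterMap (fun p => colEntry? p r)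

def maxRow (U : SkewCols) : ℕ := (U.map (fun p => p.1 + p.2.length)).foldr max 0

/-- The row reading word: rows from bottom to top, each read left to right. -/
def rowWord (U : SkewCols) : List ℕ :=
  ((List.range (maxRow U)).reverse.map (skewRow U)).flatten

/-- Schensted row insertion of x into one row. -/
def rowInsert (x : ℕ) : List ℕ → List ℕ × Option ℕ
  | [] => ([x], none)
  | y :: ys =>
    if y ≤ x then
      let r := rowInsert x ys
      (y :: r.1, r.2)
    else (x :: ys, some y)

/-- Schensted insertion of an entry into a tableau given by its rows. -/
def insertEntry : List (List ℕ) → ℕ → List (List ℕ)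
  | [], x => [[x]]
  | row :: rows, x =>
    match rowInsert x row with
    | (r, none) => r :: rows
    | (r, some y) => r :: insertEntry rows y

/-- Insertion tableau (in row form) of a word. -/
def insertWord (w : List ℕ) : List (List ℕ) :=
  w.foldl insertEntry []

/-- Convert a tableau from row form to column form. -/
def colsOfRows (rows : List (List ℕ)) : Cols :=
  (List.range (rows.headD []).length).map
    (fun j => rows.filterMap (fun r => r[j]?))

/-- Rectification of a skew tableau (jeu de taquin; computed, equivalently, as the
insertion tableau of the row reading word), in column form. -/
def rectify (U : SkewCols) : Cols := colsOfRows (insertWord (rowWord U))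

/-- Frank: the column lengths are a rearrangement of those of the rectification. -/
def IsFrank (U : SkewCols) : Prop :=
  (U.map (fun p => p.2.length)).Perm ((rectify U).map List.length)

/-- K is the right key of T: K has the shape of T and, for each j, the j-th column
of K is the rightmost column of a frank skew tableau rectifying to T whose
rightmost column has the length of the j-th column of T. -/
def IsRightKeyOf (T K : Cols) : Prop :=
  shape K = shape T ∧
  ∀ j < T.length, ∃ U : SkewCols, IsSkewTableau U ∧ IsFrank U ∧
    rectify U = T ∧
    (U.getLastD (0, [])).2.length = (T.getD j []).length ∧
    (U.getLastD (0, [])).2 = K.getD j []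

/-- The right key R(T) of a tableau T. -/
noncomputable def rightKey (T : Cols) : Cols :=
  Classical.epsilon (IsRightKeyOf T)

/-- The key of the permutation w of shape given by the column lengths `zeta`:
its column of length k consists of w(1), ..., w(k) (values in [n]) sorted. -/
def keyOf (n : ℕ) (w : Equiv.Perm (Fin n)) (zeta : List ℕ) : Cols :=
  zeta.map (fun k =>
    List.insertionSort (· ≤ ·)
      ((List.range k).filterMap (fun i =>
        if h : i < n then some (((w ⟨i, h⟩ : Fin n) : ℕ) + 1) else none)))

/-- w is 312-avoiding. -/
def Is312Avoiding {n : ℕ} (w : Equiv.Perm (Fin n)) : Prop :=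
  ¬ ∃ a b c : Fin n, a < b ∧ b < c ∧ w b < w c ∧ w c < w a

/-- The set of Demazure tableaux D_λ(w): semistandard tableaux of the given shape
with entries in [n] whose right key is entrywise dominated by the key of w. -/
def DemazureSet (n : ℕ) (zeta : List ℕ) (w : Equiv.Perm (Fin n)) : Set Cols :=
  {T | IsSSYT T ∧ shape T = zeta ∧ EntriesIn n T ∧
       EntrywiseLE (rightKey T) (keyOf n w zeta)}

/-- Column lengths of the partial staircase λ = (d,...,d,d-1,...,2,1):
ζ = (n, n-1, ..., n+1-d). -/
def staircaseCols (n d : ℕ) : List ℕ := (List.range d).map (fun j => n - j)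

/-- S ⊆ ℤ^N is a convex polytope: the set of integral solutions of Ax ≤ b. -/
def IsConvexPolytopeSet (N : ℕ) (S : Set (Fin N → ℤ)) : Prop :=
  ∃ (m : ℕ) (A : Matrix (Fin m) (Fin N) ℝ) (bb : Fin m → ℝ),
    S = {x | ∀ r, A.mulVec (fun i => (x i : ℝ)) r ≤ bb r}

/-- The point of ℤ^N obtained by reading the entries of a tableau in a fixed order. -/
def toPoint (N : ℕ) (T : Cols) : Fin N → ℤ := fun i => (T.flatten.getD i 0 : ℤ)


/-- One reverse jeu de taquin slide on a pair of adjacent offset columns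
(oL, X) and (oR, Y), the hole starting at the outside corner directly below Y.
The hole moves up pulling entries of Y down until the left neighbour is strictly
larger than the upper one, in which case the left entry slides right and the left
column's entries above it slide down. -/
def revSlide (oL : ℕ) (X : List ℕ) (oR : ℕ) (Y : List ℕ) :
    ℕ × List ℕ × ℕ × List ℕ :=
  match (List.range (Y.length + 1)).reverse.find? (fun t =>
      let r := oR + t
      match colEntry? (oL, X) r, (if t = 0 then none else colEntry? (oR, Y) (r-1)) with
      | some _, none => true
      | some xv, some yv => decide (yv < xv)
      | none, _ => false) with
  | some t =>
      let r := oR + t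
      (oL + 1, X.take (r - oL) ++ X.drop (r - oL + 1),
       oR, Y.take t ++ [X.getD (r - oL) 0] ++ Y.drop t)
  | none => (oL, X, oR + 1, Y)

/-- Iterate x_j = l(U_j) − l(U_{j+1}) reverse slides on the pair of columns. -/
def lengthSwapPair : ℕ → ℕ × List ℕ × ℕ × List ℕ → ℕ × List ℕ × ℕ × List ℕ
  | 0, s => s
  | k+1, (oL, X, oR, Y) => lengthSwapPair k (revSlide oL X oR Y)

/-- The number of boxes of column p attached to boxes of column q. -/
def attached (p q : ℕ × List ℕ) : ℕ :=
  min (p.1 + p.2.length) (q.1 + q.2.length) - max p.1 q.1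

/-- The j-th length swap (1-indexed j): shift columns 1, ..., j−1 down by d_j
(the number of boxes of U_{j-1} attached to U_j) and perform
l(U_j) − l(U_{j+1}) reverse slides on the outside corner of U_j ⊕ U_{j+1}. -/
def lengthSwapAt (U : SkewCols) (j : ℕ) : SkewCols :=
  match U[j-1]?, U[j]? with
  | some p, some q =>
    let d : ℕ :=
      if 2 ≤ j then
        match U[j-2]?, U[j-1]? with
        | some p', some q' => attached p' q'
        | _, _ => 0
      else 0
    let res := lengthSwapPair (p.2.length - q.2.length) (p.1, p.2, q.1, q.2)
    ((U.take (j-1)).map (fun r => (r.1 + d, r.2)))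
      ++ [(res.1, res.2.1), (res.2.2.1, res.2.2.2)] ++ U.drop (j+1)
  | _, _ => U

/-- `Tstage T j` is T^{(j+1)}: T^{(1)} is T itself (offsets 0), and T^{(j+1)} is
obtained from T^{(j)} by the j-th length swap. -/
def Tstage (T : Cols) : ℕ → SkewCols
  | 0 => T.map (fun c => (0, c))
  | j+1 => lengthSwapAt (Tstage T j) (j+1)

/-- b_h^{(j)}: bottom entry of column h of T^{(j)} (1-indexed h, j). -/
def bstage (T : Cols) (j h : ℕ) : ℕ :=
  ((Tstage T (j-1)).getD (h-1) (0, [])).2.getLastD 0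

/-!
During the `j`-th length swap, the column `X` in position `j` of `T^{(j)}` and the column `Y` of
`T` to its right undergo `|X| - |Y|` reverse slides, each of which moves one entry of `X`
into `Y`. Both columns stay strictly increasing and `X` stays weakly left of `Y` row by row; at
the end both columns end in the same row, so the bottom entry of `X` is at most that of `Y`. As
entries are only moved, the largest entry of `X` and `Y` ends at the bottom of the new column
`j + 1`: `b_{j+1}^{(j+1)} = max b_j^{(j)} b_{j+1}^{(j)}`. The new column is entrywise at most the
old column `Y`, hence at most the next column of `T`, which is what the next swap needs.
-/

end Demazure

namespace List

variable {α : Type*}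

theorem getElem?_eq_some_getD {l : List α} {n : ℕ} (h : n < l.length) (d : α) :
    l[n]? = some (l.getD n d) := by
  rw [getD_eq_getElem _ _ h, getElem?_eq_getElem h]

theorem getLastD_eq_getD (l : List α) (d : α) : l.getLastD d = l.getD (l.length - 1) d := by
  cases l with
  | nil => rfl
  | cons a l => simp [getLast?_eq_getElem?, getD_eq_getElem?_getD]

theorem getD_insertIdx {l : List α} {t : ℕ} (ht : t ≤ l.length) (x : α) (r : ℕ) (d : α) :
    (l.insertIdx t x).getD r d =
      if r < t then l.getD r d else if r = t then x else l.getD (r - 1) d := by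
  simp only [getD_eq_getElem?_getD, getElem?_insertIdx]
  grind

theorem getD_eraseIdx (l : List α) (i r : ℕ) (d : α) :
    (l.eraseIdx i).getD r d = if r < i then l.getD r d else l.getD (r + 1) d := by
  simp only [getD_eq_getElem?_getD, getElem?_eraseIdx]
  grind

theorem take_append_singleton_append_drop {l : List α} {t : ℕ} (ht : t ≤ l.length) (x : α) :
    l.take t ++ [x] ++ l.drop t = l.insertIdx t x := by
  ext1 r
  simp only [getElem?_insertIdx, append_assoc, singleton_append, getElem?_append, length_take,
    getElem?_take]
  grind

theorem eraseIdx_append_insertIdx_perm {X Y : List α} {i t : ℕ} (hi : i < X.length)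
    (ht : t ≤ Y.length) : (X.eraseIdx i ++ Y.insertIdx t X[i]).Perm (X ++ Y) :=
  ((perm_insertIdx _ _ ht).append_left _).trans (perm_middle.trans
    ((getElem_cons_eraseIdx_perm hi).append_right Y))

theorem find?_reverse_range_eq_some {p : ℕ → Bool} {n t : ℕ} (htn : t < n) (ht : p t)
    (hgt : ∀ s, t < s → s < n → p s = false) : (range n).reverse.find? p = some t := by
  induction n with
  | zero => omega
  | succ n ih =>
    rw [range_succ, reverse_append, reverse_singleton, singleton_append, find?_cons]
    rcases Nat.lt_succ_iff_lt_or_eq.1 htn with htn | rfl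
    · rw [hgt n htn n.lt_succ_self]
      exact ih htn fun s hts hsn => hgt s hts (hsn.trans n.lt_succ_self)
    · rw [ht]

section Preorder

variable [Preorder α] {l : List α}

theorem isChain_lt_of_getD_lt_getD_succ {d : α}
    (h : ∀ a, a + 1 < l.length → l.getD a d < l.getD (a + 1) d) : l.IsChain (· < ·) := by
  refine isChain_iff_getElem.2 fun a ha => ?_
  simpa only [getD_eq_getElem _ _ ha, getD_eq_getElem _ _ (Nat.lt_of_succ_lt ha)] using h a ha

theorem IsChain.getD_lt_getD (h : l.IsChain (· < ·)) {a b : ℕ} (hab : a < b)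
    (hb : b < l.length) (d : α) : l.getD a d < l.getD b d := by
  rw [getD_eq_getElem _ _ (hab.trans hb), getD_eq_getElem _ _ hb]
  exact pairwise_iff_getElem.1 (isChain_iff_pairwise.1 h) a b (hab.trans hb) hb hab

theorem IsChain.le_getLastD (h : l.IsChain (· < ·)) {z : α} (hz : z ∈ l) (d : α) :
    z ≤ l.getLastD d := by
  rw [getLastD_eq_getLast?, getLast?_eq_some_getLast (ne_nil_of_mem hz)]
  exact ((isChain_iff_pairwise.1 h).imp le_of_lt).rel_getLast hz

theorem IsChain.insertIdx {t : ℕ} {x d : α} (h : l.IsChain (· < ·)) (ht : t ≤ l.length)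
    (hlo : t = 0 ∨ l.getD (t - 1) d < x) (hhi : t < l.length → x < l.getD t d) :
    (l.insertIdx t x).IsChain (· < ·) := by
  refine isChain_lt_of_getD_lt_getD_succ (d := d) fun r hr => ?_
  rw [length_insertIdx_of_le_length ht] at hr
  rw [getD_insertIdx ht, getD_insertIdx ht]
  split_ifs
  all_goals first
    | omega
    | exact h.getD_lt_getD (by omega) (by omega) d
    | (obtain rfl : t = r + 1 := by omega
       simpa using hlo)
    | (obtain rfl : r = t := by omega
       simpa using hhi (by omega))

end Preorder

end List

namespace Demazure

theorem colEntry?_eq_some {o r : ℕ} {l : List ℕ} (hor : o ≤ r) (hr : r < o + l.length) :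
    colEntry? (o, l) r = some (l.getD (r - o) 0) := by
  simp only [colEntry?, if_pos hor]
  exact List.getElem?_eq_some_getD (by omega) 0

theorem colEntry?_eq_none {o r : ℕ} {l : List ℕ} (hro : r < o) : colEntry? (o, l) r = none := by
  simp only [colEntry?, if_neg (Nat.not_le.2 hro)]

/-- Row `t ≤ Y.length` is a slot when the hole of a reverse slide, moving up column `Y` (which starts
in row `0`), would move left there into column `X` (which starts in row `oL`); `revSlide` uses the
lowest slot. -/
def IsSlot (oL : ℕ) (X Y : List ℕ) (t : ℕ) : Prop :=
  oL ≤ t ∧ (t = 0 ∨ Y.getD (t - 1) 0 < X.getD (t - oL) 0)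

theorem revSlide_eq {oL t : ℕ} {X Y : List ℕ} (hXY : Y.length < oL + X.length)
    (ht : t ≤ Y.length) (hslot : IsSlot oL X Y t)
    (hmax : ∀ s, t < s → s ≤ Y.length → ¬ IsSlot oL X Y s) :
    revSlide oL X 0 Y =
      (oL + 1, X.eraseIdx (t - oL), 0, Y.insertIdx t (X.getD (t - oL) 0)) := by
  unfold revSlide
  rw [List.find?_reverse_range_eq_some (t := t) (by omega) ?_ ?_]
  · simp [List.eraseIdx_eq_take_drop_succ, List.take_append_singleton_append_drop ht]
  · obtain ⟨hoL, hlt⟩ := hslot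
    dsimp only
    rw [Nat.zero_add, colEntry?_eq_some hoL (by omega)]
    rcases Nat.eq_zero_or_pos t with rfl | htpos
    · rfl
    · rw [if_neg htpos.ne', colEntry?_eq_some (Nat.zero_le _) (by omega)]
      simpa [htpos.ne'] using hlt
  · intro s hts hsY
    dsimp only
    rw [Nat.zero_add]
    by_cases hoL : oL ≤ s
    · have hle := hmax s hts (by omega)
      simp only [IsSlot, hoL, true_and, not_or, not_lt] at hle
      rw [colEntry?_eq_some hoL (by omega), if_neg hle.1,
        colEntry?_eq_some (Nat.zero_le _) (by omega)]
      simpa using hle.2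
    · rw [colEntry?_eq_none (by omega)]

def AdjacentCols (X Y : List ℕ) : Prop :=
  Y.length ≤ X.length ∧ ∀ r < Y.length, X.getD r 0 ≤ Y.getD r 0

theorem AdjacentCols.refl (X : List ℕ) : AdjacentCols X X := ⟨le_rfl, fun _ _ => le_rfl⟩

theorem AdjacentCols.trans {X Y Z : List ℕ} (hXY : AdjacentCols X Y) (hYZ : AdjacentCols Y Z) :
    AdjacentCols X Z :=
  ⟨hYZ.1.trans hXY.1, fun r hr => (hXY.2 r (hr.trans_le hYZ.1)).trans (hYZ.2 r hr)⟩

theorem adjacentCols_insertIdx {Y : List ℕ} {t x : ℕ} (hY : Y.IsChain (· < ·)) (ht : t ≤ Y.length)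
    (hhi : t < Y.length → x < Y.getD t 0) : AdjacentCols (Y.insertIdx t x) Y := by
  refine ⟨by rw [List.length_insertIdx_of_le_length ht]; omega, fun r hr => ?_⟩
  rw [List.getD_insertIdx ht]
  split_ifs
  all_goals first
    | exact le_rfl
    | exact (hY.getD_lt_getD (by omega) hr 0).le
    | (obtain rfl : r = t := by omega
       exact (hhi hr).le)

theorem IsSSYT.isChain_getD {T : Cols} (hT : IsSSYT T) (i : ℕ) :
    (T.getD i []).IsChain (· < ·) := by
  rcases lt_or_ge i T.length with hi | hi
  · exact hT.2.1 _ (by rw [List.getD_eq_getElem _ _ hi]; exact List.getElem_mem hi)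
  · rw [List.getD_eq_default _ _ hi]; exact List.isChain_nil

theorem IsSSYT.adjacentCols {T : Cols} (hT : IsSSYT T) (i : ℕ) :
    AdjacentCols (T.getD i []) (T.getD (i + 1) []) := by
  rcases lt_or_ge (i + 1) T.length with hi | hi
  · have hlen := List.isChain_iff_getElem.1 hT.1 i (by simpa [shape] using hi)
    simp only [shape, List.getElem_map] at hlen
    rw [List.getD_eq_getElem _ _ hi, List.getD_eq_getElem _ _ (Nat.lt_of_succ_lt hi)]
    exact ⟨hlen, List.isChain_iff_getElem.1 hT.2.2 i hi⟩
  · rw [List.getD_eq_default _ _ hi]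
    exact ⟨Nat.zero_le _, fun r hr => absurd hr (Nat.not_lt_zero r)⟩

/-- The state of a length swap with `n` reverse slides still to do: the left column `X` occupies
rows `oL, ..., L - 1`, the right column `Y` rows `0, ..., L - n - 1`. -/
structure SlideInv (L n oL : ℕ) (X Y : List ℕ) : Prop where
  left_length : oL + X.length = L
  right_length : Y.length + n = L
  left_chain : X.IsChain (· < ·)
  right_chain : Y.IsChain (· < ·)
  rows_le : ∀ r, oL ≤ r → r < Y.length → X.getD (r - oL) 0 ≤ Y.getD r 0
  exists_slot : 1 ≤ n → ∃ t ≤ Y.length, IsSlot oL X Y t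

theorem SlideInv.slide {L n oL t : ℕ} {X Y : List ℕ} (h : SlideInv L (n + 1) oL X Y)
    (ht : t ≤ Y.length) (hslot : IsSlot oL X Y t)
    (hmax : ∀ s, t < s → s ≤ Y.length → ¬ IsSlot oL X Y s) :
    SlideInv L n (oL + 1) (X.eraseIdx (t - oL)) (Y.insertIdx t (X.getD (t - oL) 0)) ∧
      AdjacentCols (Y.insertIdx t (X.getD (t - oL) 0)) Y := by
  obtain ⟨hL, hYL, hX, hY, rows, -⟩ := h
  obtain ⟨htoL, hlow⟩ := hslot
  have hbelow : ∀ s, t < s → s ≤ Y.length → X.getD (s - oL) 0 ≤ Y.getD (s - 1) 0 := by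
    intro s hts hsY
    simpa [IsSlot, show oL ≤ s by omega, show s ≠ 0 by omega] using hmax s hts hsY
  have hhigh : t < Y.length → X.getD (t - oL) 0 < Y.getD t 0 := fun htY =>
    (hX.getD_lt_getD (a := t - oL) (b := t + 1 - oL) (by omega) (by omega) 0).trans_le
      (hbelow (t + 1) (by omega) htY)
  have hlen := List.length_insertIdx_of_le_length ht (X.getD (t - oL) 0)
  have hins := List.getD_insertIdx ht (X.getD (t - oL) 0)
  have hera := List.getD_eraseIdx X (t - oL)
  refine ⟨⟨?_, by omega, hX.sublist (List.eraseIdx_sublist _ _),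
    hY.insertIdx ht hlow hhigh, fun r hr hrY => ?_, fun hn => ?_⟩, adjacentCols_insertIdx hY ht hhigh⟩
  · rw [List.length_eraseIdx_of_lt (by omega)]; omega
  · rw [hera, hins]
    split_ifs
    all_goals first
      | omega
      | exact (hX.getD_lt_getD (a := r - (oL + 1)) (b := r - oL) (by omega) (by omega) 0).le.trans
          (rows r (by omega) (by omega))
      | exact (hX.getD_lt_getD (by omega) (by omega) 0).le
      | simpa [show r - (oL + 1) + 1 = r - oL by omega] using hbelow r (by omega) (by omega)
  · refine ⟨t + 1, by rw [hlen]; omega, by omega, Or.inr ?_⟩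
    rw [Nat.add_sub_cancel, Nat.add_sub_add_right, hera, hins, if_neg (lt_irrefl _), if_pos rfl,
      if_neg (lt_irrefl _)]
    exact hX.getD_lt_getD (Nat.lt_succ_self _) (by omega) 0

theorem SlideInv.exists_revSlide_eq {L n oL : ℕ} {X Y : List ℕ} (h : SlideInv L (n + 1) oL X Y) :
    ∃ X' Y', revSlide oL X 0 Y = (oL + 1, X', 0, Y') ∧ SlideInv L n (oL + 1) X' Y' ∧
      AdjacentCols Y' Y ∧ (X' ++ Y').Perm (X ++ Y) := by
  classical
  obtain ⟨u, hu, hslot⟩ := h.exists_slot le_add_self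
  set t := Nat.findGreatest (IsSlot oL X Y) Y.length
  have ht : t ≤ Y.length := Nat.findGreatest_le _
  have htslot : IsSlot oL X Y t := Nat.findGreatest_spec hu hslot
  have hmax : ∀ s, t < s → s ≤ Y.length → ¬ IsSlot oL X Y s :=
    fun _ => Nat.findGreatest_is_greatest
  have hXY : Y.length < oL + X.length := by have := h.left_length; have := h.right_length; omega
  have hi : t - oL < X.length := by have := htslot.1; omega
  obtain ⟨hinv, hadj⟩ := h.slide ht htslot hmax
  refine ⟨_, _, revSlide_eq hXY ht htslot hmax, hinv, hadj, ?_⟩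
  rw [List.getD_eq_getElem _ _ hi]
  exact List.eraseIdx_append_insertIdx_perm hi ht

theorem SlideInv.exists_lengthSwapPair_eq {L : ℕ} :
    ∀ {n oL : ℕ} {X Y : List ℕ}, SlideInv L n oL X Y →
      ∃ o X' Y', lengthSwapPair n (oL, X, 0, Y) = (o, X', 0, Y') ∧ SlideInv L 0 o X' Y' ∧
        AdjacentCols Y' Y ∧ (X' ++ Y').Perm (X ++ Y)
  | 0, oL, X, Y, h => ⟨oL, X, Y, rfl, h, AdjacentCols.refl Y, List.Perm.refl _⟩
  | n + 1, oL, X, Y, h => by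
    obtain ⟨X₁, Y₁, hslide, h₁, hadj₁, hperm₁⟩ := h.exists_revSlide_eq
    obtain ⟨o, X', Y', hiter, h', hadj, hperm⟩ := h₁.exists_lengthSwapPair_eq
    exact ⟨o, X', Y', by rw [lengthSwapPair, hslide, hiter], h', hadj.trans hadj₁,
      hperm.trans hperm₁⟩

theorem SlideInv.getLastD_le {L oL : ℕ} {X Y : List ℕ} (h : SlideInv L 0 oL X Y) :
    X.getLastD 0 ≤ Y.getLastD 0 := by
  have hXL := h.left_length
  have hYL := h.right_length
  rw [List.getLastD_eq_getD, List.getLastD_eq_getD]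
  rcases Nat.eq_zero_or_pos X.length with hX | hX
  · rw [List.length_eq_zero_iff.1 hX]; exact Nat.zero_le _
  · have := h.rows_le (L - 1) (by omega) (by omega)
    rwa [show L - 1 - oL = X.length - 1 by omega, show L - 1 = Y.length - 1 by omega] at this

theorem max_getLastD_le_of_subset {X Y X' Y' : List ℕ} (hX' : X'.IsChain (· < ·))
    (hY' : Y'.IsChain (· < ·)) (h : X ++ Y ⊆ X' ++ Y') :
    max (X.getLastD 0) (Y.getLastD 0) ≤ max (X'.getLastD 0) (Y'.getLastD 0) := by
  have bound (l : List ℕ) (hl : l ⊆ X' ++ Y') :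
      l.getLastD 0 ≤ max (X'.getLastD 0) (Y'.getLastD 0) := by
    rcases List.mem_cons.1 (List.getLastD_mem_cons (l := l) (a := 0)) with h0 | hmem
    · rw [h0]; exact Nat.zero_le _
    · rcases List.mem_append.1 (hl hmem) with hz | hz
      · exact le_max_of_le_left (hX'.le_getLastD hz 0)
      · exact le_max_of_le_right (hY'.le_getLastD hz 0)
  exact max_le (bound X fun _ hz => h (List.mem_append_left _ hz))
    (bound Y fun _ hz => h (List.mem_append_right _ hz))

theorem exists_lengthSwapPair_eq {X Y : List ℕ} (hX : X.IsChain (· < ·)) (hY : Y.IsChain (· < ·))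
    (hXY : AdjacentCols X Y) :
    ∃ Y', (lengthSwapPair (X.length - Y.length) (0, X, 0, Y)).2.2 = (0, Y') ∧
      Y'.IsChain (· < ·) ∧ AdjacentCols Y' Y ∧ Y'.getLastD 0 = max (X.getLastD 0) (Y.getLastD 0) := by
  have hinit : SlideInv X.length (X.length - Y.length) 0 X Y :=
    ⟨Nat.zero_add _, by have := hXY.1; omega, hX, hY, fun r _ hr => by simpa using hXY.2 r hr,
      fun _ => ⟨0, Nat.zero_le _, le_rfl, Or.inl rfl⟩⟩
  obtain ⟨o, X', Y', hiter, hfin, hadj, hperm⟩ := hinit.exists_lengthSwapPair_eq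
  refine ⟨Y', by rw [hiter], hfin.right_chain, hadj, ?_⟩
  rw [← max_eq_right hfin.getLastD_le]
  exact le_antisymm (max_getLastD_le_of_subset hX hY hperm.subset)
    (max_getLastD_le_of_subset hfin.left_chain hfin.right_chain hperm.symm.subset)

theorem getElem?_lengthSwapAt_succ {U : SkewCols} {m : ℕ} {p q : ℕ × List ℕ}
    (hp : U[m]? = some p) (hq : U[m + 1]? = some q) :
    (lengthSwapAt U (m + 1))[m + 1]? =
      some (lengthSwapPair (p.2.length - q.2.length) (p.1, p.2, q.1, q.2)).2.2 := by
  have hm : m < U.length := (List.getElem?_eq_some_iff.1 hp).1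
  simp [lengthSwapAt, hp, hq, Nat.min_eq_left hm.le]

theorem getElem?_lengthSwapAt_of_gt {U : SkewCols} {m i : ℕ} {p q : ℕ × List ℕ}
    (hp : U[m]? = some p) (hq : U[m + 1]? = some q) (hi : m + 1 < i) :
    (lengthSwapAt U (m + 1))[i]? = U[i]? := by
  have hm : m < U.length := (List.getElem?_eq_some_iff.1 hp).1
  obtain ⟨k, rfl⟩ := Nat.exists_eq_add_of_lt hi
  simp only [lengthSwapAt, Nat.add_sub_cancel, hp, hq]
  rw [List.getElem?_append_right (by simp; omega)]
  simp [Nat.min_eq_left hm.le, Nat.add_right_comm _ 1 k]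

/-- `T^{(m+1)}` has the unshifted column `Z` in position `m + 1` and, to its right, the columns
of `T`. -/
def StageForm (T : Cols) (m : ℕ) (Z : List ℕ) : Prop :=
  (Tstage T m)[m]? = some (0, Z) ∧ ∀ i, m < i → (Tstage T m)[i]? = T[i]?.map (Prod.mk 0)

theorem StageForm.bstage_self {T : Cols} {m : ℕ} {Z : List ℕ} (h : StageForm T m Z) :
    bstage T (m + 1) (m + 1) = Z.getLastD 0 := by
  simp [bstage, List.getD_eq_getElem?_getD, h.1]

theorem StageForm.bstage_succ {T : Cols} {m : ℕ} {Z : List ℕ} (h : StageForm T m Z) :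
    bstage T (m + 1) (m + 2) = (T.getD (m + 1) []).getLastD 0 := by
  rw [bstage, show m + 2 - 1 = m + 1 from rfl, Nat.add_sub_cancel, List.getD_eq_getElem?_getD,
    h.2 (m + 1) (Nat.lt_succ_self m), List.getD_eq_getElem?_getD]
  cases T[m + 1]? <;> rfl

theorem StageForm.succ {T : Cols} {m : ℕ} {Z : List ℕ} (hT : IsSSYT T) (h : StageForm T m Z)
    (hm : m + 1 < T.length) (hZ : Z.IsChain (· < ·)) (hZT : AdjacentCols Z (T.getD (m + 1) [])) :
    ∃ Y', StageForm T (m + 1) Y' ∧ Y'.IsChain (· < ·) ∧ AdjacentCols Y' (T.getD (m + 2) []) ∧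
      Y'.getLastD 0 = max (Z.getLastD 0) ((T.getD (m + 1) []).getLastD 0) := by
  have hq : (Tstage T m)[m + 1]? = some (0, T.getD (m + 1) []) := by
    rw [h.2 (m + 1) (Nat.lt_succ_self m), List.getElem?_eq_some_getD hm]; rfl
  obtain ⟨Y', hY', hY'c, hY'T, hbot⟩ := exists_lengthSwapPair_eq hZ (hT.isChain_getD (m + 1)) hZT
  refine ⟨Y', ⟨?_, fun i hi => ?_⟩, hY'c, hY'T.trans (hT.adjacentCols (m + 1)), hbot⟩
  · rw [Tstage, getElem?_lengthSwapAt_succ h.1 hq, hY']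
  · rw [Tstage, getElem?_lengthSwapAt_of_gt h.1 hq hi, h.2 i (by omega)]

theorem exists_stageForm {T : Cols} (hT : IsSSYT T) :
    ∀ {m : ℕ}, m < T.length →
      ∃ Z, StageForm T m Z ∧ Z.IsChain (· < ·) ∧ AdjacentCols Z (T.getD (m + 1) [])
  | 0, h0 => by
    refine ⟨T.getD 0 [], ⟨?_, fun i _ => List.getElem?_map⟩, hT.isChain_getD 0,
      hT.adjacentCols 0⟩
    rw [Tstage, List.getElem?_map, List.getElem?_eq_some_getD h0]; rfl
  | m + 1, hm => by
    obtain ⟨Z, hZ, hZc, hZT⟩ := exists_stageForm hT (Nat.lt_of_succ_lt hm)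
    obtain ⟨Y', hY', hY'c, hY'T, -⟩ := hZ.succ hT hm hZc hZT
    exact ⟨Y', hY', hY'c, hY'T⟩

/-- for 1 ≤ j ≤ k−1, if b_{j+1}^{(j)} ≥ b_j^{(j)} then
b_{j+1}^{(j+1)} = b_{j+1}^{(j)}, and otherwise b_{j+1}^{(j+1)} = b_j^{(j)}. -/
theorem bottom_after_lengthSwap (T : Cols) (hT : IsSSYT T)
    (j : ℕ) (hj1 : 1 ≤ j) (hjk : j + 1 ≤ T.length) :
    (bstage T j j ≤ bstage T j (j+1) → bstage T (j+1) (j+1) = bstage T j (j+1)) ∧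
    (bstage T j (j+1) < bstage T j j → bstage T (j+1) (j+1) = bstage T j j) := by
  obtain ⟨m, rfl⟩ : ∃ m, j = m + 1 := ⟨j - 1, by omega⟩
  obtain ⟨Z, hZ, hZc, hZT⟩ := exists_stageForm hT (m := m) (by omega)
  obtain ⟨Y', hY', -, -, hbot⟩ := hZ.succ hT (by omega) hZc hZT
  have hmax : bstage T (m + 2) (m + 2) =
      max (bstage T (m + 1) (m + 1)) (bstage T (m + 1) (m + 2)) := by
    rw [hY'.bstage_self, hZ.bstage_self, hZ.bstage_succ, hbot]
  exact ⟨fun h => hmax.trans (max_eq_right h), fun h => hmax.trans (max_eq_left h.le)⟩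

end Demazure
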